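/- Let M be an o-minimal, countable ω-homogeneous structure such that dcl(a) is bounded above in M for every finite a ⊆ M. If X ⊆ M is unbounded above and its complement M \ X is also unbounded above, then X has no support. -/

import Mathlib

open FirstOrder Language

/-- The image of `x : M` in `WithBot (WithTop M)`, the order `M` extended by `±∞`. -/
def toInf {M : Type*} (x : M) : WithBot (WithTop M) := ((x : WithTop M) : WithBot (WithTop M))

/-- `M` is o-minimal: every subset of `M` definable with parameters is a finite union of
points and open intervals with endpoints in `M ∪ {±∞}`. -/
def IsOMinimalStructure (L : Language) (M : Type*) [L.Structure M] [LinearOrder M] : Prop :=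
  ∀ s : Set M, (Set.univ : Set M).Definable₁ L s →
    ∃ (P : Finset M) (Iv : Finset (WithBot (WithTop M) × WithBot (WithTop M))),
      s = ↑P ∪ ⋃ p ∈ Iv, {x : M | p.1 < toInf x ∧ toInf x < p.2}

/-- The definable closure of `A` in `M`. -/
def dclSet (L : Language) {M : Type*} [L.Structure M] (A : Set M) : Set M :=
  {x : M | A.Definable₁ L {x}}

/-- Two tuples realize the same first-order type. -/
def SameTypeL (L : Language) {M : Type*} [L.Structure M] {n : ℕ} (v w : Fin n → M) : Prop :=
  ∀ φ : L.Formula (Fin n), φ.Realize v ↔ φ.Realize w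

/-- `M` is ω-homogeneous. -/
def OmegaHom (L : Language) (M : Type*) [L.Structure M] : Prop :=
  ∀ (n : ℕ) (v w : Fin n → M), SameTypeL L v w →
    ∀ c : M, ∃ d : M, SameTypeL L (Fin.snoc v c) (Fin.snoc w d)


/-!
Enlarge the parameters `a` to a finite set `A` over which `≤` is definable. By o-minimality an
`A`-definable set `s` is eventually constant at `+∞`, and when `s` eventually holds, the infimum
of `{c | [c, ∞) ⊆ s}` is definable over `A`, hence lies below every element above `dcl A`. So all
elements above `dcl A` have the same type over `A`. For `x ∈ X` and `y ∉ X` above `dcl A`, a back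
and forth argument, using ω-homogeneity and countability, gives an automorphism fixing `a` and
sending `x` to `y`; it does not preserve `X`.
-/

open Set Structure

section BackAndForth

variable {L : Language} {M N : Type*} [L.Structure M] [L.Structure N]

variable (L) in
def IsElementaryGraph (G : Set (M × N)) : Prop :=
  ∀ (n : ℕ) (φ : L.Formula (Fin n)) (u : Fin n → M × N), (∀ i, u i ∈ G) →
    (φ.Realize (Prod.fst ∘ u) ↔ φ.Realize (Prod.snd ∘ u))

theorem isElementaryGraph_range_iff {n : ℕ} (p : Fin n → M × M) :
    IsElementaryGraph L (range p) ↔ SameTypeL L (Prod.fst ∘ p) (Prod.snd ∘ p) := by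
  refine ⟨fun h φ => h n φ p (mem_range_self ·), fun h m φ u hu => ?_⟩
  choose σ hσ using hu
  have hu : u = p ∘ σ := funext fun i => (hσ i).symm
  subst hu
  simpa only [Formula.realize_relabel, Function.comp_assoc] using h (φ.relabel σ)

theorem isElementaryGraph_iUnion {ι : Type*} [Nonempty ι] {G : ι → Set (M × N)}
    (hdir : Directed (· ⊆ ·) G) (hG : ∀ i, IsElementaryGraph L (G i)) :
    IsElementaryGraph L (⋃ i, G i) := by
  intro n φ u hu
  choose j hj using fun t => mem_iUnion.mp (hu t)
  obtain ⟨k, hk⟩ := hdir.finite_le j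
  exact hG k n φ u fun t => hk t (hj t)

theorem IsElementaryGraph.eq_iff_eq {G : Set (M × N)} (hG : IsElementaryGraph L G)
    {p q : M × N} (hp : p ∈ G) (hq : q ∈ G) : p.1 = q.1 ↔ p.2 = q.2 := by
  simpa using hG 2 ((Term.var 0).equal (Term.var 1)) ![p, q] (Fin.forall_fin_two.mpr ⟨hp, hq⟩)

theorem IsElementaryGraph.exists_equiv {G : Set (M × N)} (hG : IsElementaryGraph L G)
    (hdom : ∀ a, ∃ b, (a, b) ∈ G) (hran : ∀ b, ∃ a, (a, b) ∈ G) :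
    ∃ π : M ≃[L] N, ∀ p ∈ G, π p.1 = p.2 := by
  choose f hf using hdom
  choose g hg using hran
  have hfg : ∀ p ∈ G, f p.1 = p.2 := fun p hp => (hG.eq_iff_eq (hf p.1) hp).mp rfl
  refine ⟨⟨⟨f, g, fun a => ?_, fun b => hfg _ (hg b)⟩, fun F x => ?_, fun r x => ?_⟩,
    hfg⟩
  · exact (hG.eq_iff_eq (hg (f a)) (hf a)).mpr rfl
  · have := hG _ ((Term.func F fun t => Term.var (Fin.castSucc t)).equal (Term.var (Fin.last _)))
      (Fin.snoc (fun t => (x t, f (x t))) (funMap F x, f (funMap F x)))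
      (Fin.lastCases (by simpa using hf _) (fun t => by simpa using hf _))
    simp only [Fin.comp_snoc, Formula.realize_equal, Term.realize_func, Term.realize_var,
      Fin.snoc_castSucc, Function.comp_apply, Fin.snoc_last, true_iff] at this
    exact this.symm
  · have := hG _ (r.formula Term.var) (fun t => (x t, f (x t))) (fun t => hf _)
    simp only [Function.comp_def, Formula.realize_rel, Term.realize_var] at this
    exact this.symm

end BackAndForth

section Homogeneous

variable {L : Language} {M : Type*} [L.Structure M]

theorem SameTypeL.symm {n : ℕ} {v w : Fin n → M} (h : SameTypeL L v w) : SameTypeL L w v :=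
  fun φ => (h φ).symm

theorem OmegaHom.exists_isElementaryGraph_insert (hhom : OmegaHom L M) {S : Set (M × M)}
    (hS : S.Finite) (hG : IsElementaryGraph L S) (c : M) :
    (∃ d, IsElementaryGraph L (insert (c, d) S)) ∧ ∃ d, IsElementaryGraph L (insert (d, c) S) := by
  obtain ⟨n, p, rfl⟩ := hS.fin_embedding
  rw [isElementaryGraph_range_iff] at hG
  obtain ⟨d, hd⟩ := hhom n _ _ hG c
  obtain ⟨d', hd'⟩ := hhom n _ _ hG.symm c
  refine ⟨⟨d, ?_⟩, ⟨d', ?_⟩⟩ <;>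
    rw [← Fin.range_snoc, isElementaryGraph_range_iff, Fin.comp_snoc, Fin.comp_snoc]
  exacts [hd, hd'.symm]

theorem OmegaHom.exists_equiv [Countable M] (hhom : OmegaHom L M) {n : ℕ} {v w : Fin n → M}
    (h : SameTypeL L v w) : ∃ π : M ≃[L] M, ∀ i, π (v i) = w i := by
  let P := {S : Set (M × M) // S.Finite ∧ IsElementaryGraph L S}
  let reach : M ⊕ M → Set P := Sum.elim (fun c => {S | c ∈ Prod.fst '' S.1})
    (fun c => {S | c ∈ Prod.snd '' S.1})
  have hreach : ∀ i, IsCofinal (reach i) := by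
    rintro (c | c) ⟨S, hS, hG⟩
    · obtain ⟨d, hd⟩ := (hhom.exists_isElementaryGraph_insert hS hG c).1
      exact ⟨⟨_, hS.insert _, hd⟩, ⟨_, mem_insert _ _, rfl⟩, subset_insert _ _⟩
    · obtain ⟨d, hd⟩ := (hhom.exists_isElementaryGraph_insert hS hG c).2
      exact ⟨⟨_, hS.insert _, hd⟩, ⟨_, mem_insert _ _, rfl⟩, subset_insert _ _⟩
  have start : IsElementaryGraph L (range fun i => (v i, w i)) :=
    (isElementaryGraph_range_iff _).mpr h
  have := Encodable.ofCountable (M ⊕ M)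
  -- Rasiowa–Sikorski: the union of this chain is an elementary graph that is total and onto.
  let chain := Order.sequenceOfCofinals (⟨_, finite_range _, start⟩ : P)
    fun i => ⟨reach i, hreach i⟩
  have hmono : Monotone chain := Order.sequenceOfCofinals.monotone _ _
  have hG : IsElementaryGraph L (⋃ k, (chain k).1) :=
    isElementaryGraph_iUnion (Monotone.directed_le fun _ _ h => hmono h) fun k => (chain k).2.2
  have hmem : ∀ i, chain (Encodable.encode i + 1) ∈ reach i :=
    Order.sequenceOfCofinals.encode_mem _ fun i => ⟨reach i, hreach i⟩
  obtain ⟨π, hπ⟩ := hG.exists_equiv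
    (fun a => by obtain ⟨p, hp, rfl⟩ := hmem (.inl a); exact ⟨p.2, mem_iUnion.mpr ⟨_, hp⟩⟩)
    (fun b => by obtain ⟨p, hp, rfl⟩ := hmem (.inr b); exact ⟨p.1, mem_iUnion.mpr ⟨_, hp⟩⟩)
  exact ⟨π, fun i => hπ _ (mem_iUnion.mpr ⟨0, i, rfl⟩)⟩

end Homogeneous

section Definability

variable {L : Language} {M : Type*} [L.Structure M] {A : Set M}

theorem Set.Definable.definable₁_setOf_forall {R : M → M → Prop}
    (hR : A.Definable L {g : Fin 2 → M | R (g 0) (g 1)}) : A.Definable₁ L {c | ∀ t, R c t} := by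
  unfold Set.Definable₁
  convert (hR.compl.image_comp fun _ : Fin 1 => (0 : Fin 2)).compl using 1
  ext v
  simp only [mem_ofPred_eq, mem_compl_iff, mem_image, not_exists, not_and]
  constructor
  · rintro h g hg rfl
    exact hg (h _)
  · intro h t
    by_contra hR
    refine h ![v 0, t] hR (funext fun i => ?_)
    simp [Subsingleton.elim i 0]

theorem Set.Definable₁.definable_setOf_snd {s : Set M} (hs : A.Definable₁ L s) :
    A.Definable L {g : Fin 2 → M | g 1 ∈ s} :=
  hs.preimage_comp fun _ => 1

theorem definable₁_setOf_realize_snoc {n : ℕ} (a : Fin n → M) (φ : L.Formula (Fin (n + 1))) :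
    (range a).Definable₁ L {t | φ.Realize (Fin.snoc a t)} := by
  rw [Set.Definable₁, Set.definable_iff_exists_formula_sum]
  refine ⟨φ.relabel (Fin.snoc (fun i => Sum.inl (⟨a i, mem_range_self i⟩ : range a)) (Sum.inr 0)), ?_⟩
  ext v
  have : Sum.elim Subtype.val v ∘ Fin.snoc (fun i => Sum.inl (⟨a i, mem_range_self i⟩ : range a)) (Sum.inr 0) =
      Fin.snoc a (v 0) := by
    rw [Fin.comp_snoc]
    rfl
  simp only [mem_ofPred_eq, Formula.realize_relabel, this]

variable [LinearOrder M] (hle : A.Definable L {g : Fin 2 → M | g 0 ≤ g 1})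
include hle

theorem definable₁_lowerBounds {s : Set M} (hs : A.Definable₁ L s) :
    A.Definable₁ L (lowerBounds s) := by
  refine Set.Definable.definable₁_setOf_forall (R := fun c t => t ∈ s → c ≤ t) ?_
  convert hs.definable_setOf_snd.compl.union hle using 1
  ext g
  simp [imp_iff_not_or]

theorem definable₁_upperBounds {s : Set M} (hs : A.Definable₁ L s) :
    A.Definable₁ L (upperBounds s) := by
  refine Set.Definable.definable₁_setOf_forall (R := fun c t => t ∈ s → t ≤ c) ?_
  convert hs.definable_setOf_snd.compl.union (hle.preimage_comp ![1, 0]) using 1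
  ext g
  simp [imp_iff_not_or]

theorem mem_dclSet_of_isGLB {s : Set M} (hs : A.Definable₁ L s) {m : M} (hm : IsGLB s m) :
    m ∈ dclSet L A := by
  show A.Definable₁ L {m}
  have : A.Definable₁ L {c | IsGLB s c} :=
    (definable₁_lowerBounds hle hs).inter (definable₁_upperBounds hle (definable₁_lowerBounds hle hs))
  convert this using 1
  ext c
  exact ⟨fun h => h ▸ hm, fun h => h.unique hm⟩

end Definability

section OMinimal

open Filter

variable {M : Type*} [LinearOrder M]

@[simp] theorem toInf_le_toInf {a b : M} : toInf a ≤ toInf b ↔ a ≤ b := by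
  simp [toInf]

@[simp] theorem toInf_lt_toInf {a b : M} : toInf a < toInf b ↔ a < b := by
  simp [toInf]

theorem exists_toInf_eq_of_toInf_le_of_lt_toInf {q : WithBot (WithTop M)} {a b : M}
    (ha : toInf a ≤ q) (hb : q < toInf b) : ∃ e, q = toInf e := by
  induction q using WithBot.recBotCoe with
  | bot => simp [toInf] at ha
  | coe q =>
    induction q using WithTop.recTopCoe with
    | top => simp [toInf] at hb
    | coe e => exact ⟨e, rfl⟩

theorem exists_isGLB_union {s t : Set M} (hs : s.Nonempty → BddBelow s → ∃ a, IsGLB s a)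
    (ht : t.Nonempty → BddBelow t → ∃ a, IsGLB t a) (hne : (s ∪ t).Nonempty)
    (hbdd : BddBelow (s ∪ t)) : ∃ a, IsGLB (s ∪ t) a := by
  rw [bddBelow_union] at hbdd
  rcases s.eq_empty_or_nonempty with rfl | hsne
  · simpa using ht (by simpa using hne) hbdd.2
  rcases t.eq_empty_or_nonempty with rfl | htne
  · simpa using hs hsne hbdd.1
  obtain ⟨a, ha⟩ := hs hsne hbdd.1
  obtain ⟨b, hb⟩ := ht htne hbdd.2
  exact ⟨a ⊓ b, ha.union hb⟩

theorem exists_isGLB_biUnion {ι : Type*} (I : Finset ι) {f : ι → Set M}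
    (hf : ∀ i ∈ I, (f i).Nonempty → BddBelow (f i) → ∃ a, IsGLB (f i) a) :
    (⋃ i ∈ I, f i).Nonempty → BddBelow (⋃ i ∈ I, f i) → ∃ a, IsGLB (⋃ i ∈ I, f i) a := by
  classical
  induction I using Finset.induction_on with
  | empty => simp
  | insert i I _ ih =>
    simp only [Finset.set_biUnion_insert]
    exact exists_isGLB_union (hf i (Finset.mem_insert_self i I))
      (ih fun j hj => hf j (Finset.mem_insert_of_mem hj))

theorem exists_isGLB_setOf_toInf (p q : WithBot (WithTop M))
    (hne : {x : M | p < toInf x ∧ toInf x < q}.Nonempty)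
    (hbdd : BddBelow {x : M | p < toInf x ∧ toInf x < q}) :
    ∃ a, IsGLB {x : M | p < toInf x ∧ toInf x < q} a := by
  obtain ⟨x, hpx, hxq⟩ := hne
  by_cases h : ∃ l ∈ lowerBounds {x : M | p < toInf x ∧ toInf x < q}, p < toInf l
  · obtain ⟨l, hl, hpl⟩ := h
    have hlq : toInf l < q := (toInf_le_toInf.mpr (hl ⟨hpx, hxq⟩)).trans_lt hxq
    exact ⟨l, IsLeast.isGLB ⟨⟨hpl, hlq⟩, hl⟩⟩
  · push Not at h
    obtain ⟨l, hl⟩ := hbdd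
    obtain ⟨e, rfl⟩ := exists_toInf_eq_of_toInf_le_of_lt_toInf (h l hl) hpx
    exact ⟨e, fun t ht => (toInf_lt_toInf.mp ht.1).le,
      fun l hl => toInf_le_toInf.mp (h l hl)⟩

variable {L : Language} [L.Structure M]

theorem IsOMinimalStructure.exists_isGLB (homin : IsOMinimalStructure L M) {s : Set M}
    (hs : (univ : Set M).Definable₁ L s) (hne : s.Nonempty) (hbdd : BddBelow s) :
    ∃ a, IsGLB s a := by
  obtain ⟨P, Iv, rfl⟩ := homin s hs
  refine exists_isGLB_union (fun hP _ => ?_)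
    (exists_isGLB_biUnion Iv fun p _ => exists_isGLB_setOf_toInf p.1 p.2) hne hbdd
  exact ⟨_, (P.isLeast_min' (Finset.coe_nonempty.mp hP)).isGLB⟩

theorem eventually_lt_toInf_iff [NoMaxOrder M] (q : WithBot (WithTop M)) :
    ∀ᶠ t in atTop, q < toInf t ↔ q ≠ ((⊤ : WithTop M) : WithBot (WithTop M)) := by
  induction q using WithBot.recBotCoe with
  | bot => exact Eventually.of_forall fun t => by simp [toInf]
  | coe q =>
    induction q using WithTop.recTopCoe with
    | top => exact Eventually.of_forall fun t => by simp [toInf]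
    | coe e => filter_upwards [eventually_gt_atTop e] with t ht using by simp [toInf, ht]

theorem eventually_toInf_lt_iff [NoMaxOrder M] (q : WithBot (WithTop M)) :
    ∀ᶠ t in atTop, toInf t < q ↔ q = ((⊤ : WithTop M) : WithBot (WithTop M)) := by
  induction q using WithBot.recBotCoe with
  | bot => exact Eventually.of_forall fun t => by simp [toInf]
  | coe q =>
    induction q using WithTop.recTopCoe with
    | top => exact Eventually.of_forall fun t => by simp [toInf, -WithBot.coe_top]
    | coe e => filter_upwards [eventually_gt_atTop e] with t ht using by simp [toInf, ht.not_gt]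

theorem IsOMinimalStructure.eventually_mem_or_eventually_notMem [NoMaxOrder M]
    (homin : IsOMinimalStructure L M) {s : Set M} (hs : (univ : Set M).Definable₁ L s) :
    (∀ᶠ t in atTop, t ∈ s) ∨ ∀ᶠ t in atTop, t ∉ s := by
  obtain ⟨P, Iv, rfl⟩ := homin s hs
  have hconst : ∀ᶠ t in atTop, t ∈ (P : Set M) ∪ ⋃ p ∈ Iv, {x | p.1 < toInf x ∧ toInf x < p.2} ↔
      ∃ p ∈ Iv, p.1 ≠ ((⊤ : WithTop M) : WithBot (WithTop M)) ∧
        p.2 = ((⊤ : WithTop M) : WithBot (WithTop M)) := by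
    filter_upwards [(eventually_all_finset P).2 fun e _ => eventually_ne_atTop e,
      (eventually_all_finset Iv).2 fun p _ => (eventually_lt_toInf_iff p.1).and
        (eventually_toInf_lt_iff p.2)] with t hP hIv
    simp only [mem_union, Finset.mem_coe, mem_iUnion, mem_ofPred_eq, exists_prop]
    exact (or_iff_right fun h => hP t h rfl).trans
      (exists_congr fun p => and_congr_right fun hp => and_congr (hIv p hp).1 (hIv p hp).2)
  by_cases hQ : ∃ p ∈ Iv, p.1 ≠ ((⊤ : WithTop M) : WithBot (WithTop M)) ∧
      p.2 = ((⊤ : WithTop M) : WithBot (WithTop M))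
  · exact .inl (hconst.mono fun t ht => ht.mpr hQ)
  · exact .inr (hconst.mono fun t ht => mt ht.mp hQ)

end OMinimal

section AboveDcl

open Filter

variable {L : Language} {M : Type*} [L.Structure M] [LinearOrder M] {A : Set M}

theorem IsOMinimalStructure.mem_of_forall_dclSet_lt (homin : IsOMinimalStructure L M)
    (hle : A.Definable L {g : Fin 2 → M | g 0 ≤ g 1}) {s : Set M} (hs : A.Definable₁ L s)
    (hev : ∀ᶠ t in atTop, t ∈ s) {x : M} (hx : ∀ w ∈ dclSet L A, w < x) : x ∈ s := by
  let U := {c | ∀ t, c ≤ t → t ∈ s}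
  have hU : A.Definable₁ L U := by
    refine Set.Definable.definable₁_setOf_forall (R := fun c t => c ≤ t → t ∈ s) ?_
    convert hle.compl.union hs.definable_setOf_snd using 1
    ext g
    simp [imp_iff_not_or]
  suffices ∃ u ∈ U, u < x by
    obtain ⟨u, hu, hux⟩ := this
    exact hu x hux.le
  have : Nonempty M := ⟨x⟩
  by_cases hbdd : BddBelow U
  · obtain ⟨m, hm⟩ := homin.exists_isGLB (hU.mono (subset_univ A))
      (eventually_atTop.mp hev) hbdd
    obtain ⟨u, hu, -, hux⟩ := hm.exists_between (hx m (mem_dclSet_of_isGLB hle hU hm))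
    exact ⟨u, hu, hux⟩
  · simpa using not_bddBelow_iff.mp hbdd x

theorem IsOMinimalStructure.mem_iff_mem_of_forall_dclSet_lt [NoMaxOrder M]
    (homin : IsOMinimalStructure L M) (hle : A.Definable L {g : Fin 2 → M | g 0 ≤ g 1})
    {s : Set M} (hs : A.Definable₁ L s) {x y : M} (hx : ∀ w ∈ dclSet L A, w < x)
    (hy : ∀ w ∈ dclSet L A, w < y) : x ∈ s ↔ y ∈ s := by
  rcases homin.eventually_mem_or_eventually_notMem (hs.mono (subset_univ A)) with hev | hev
  · exact iff_of_true (homin.mem_of_forall_dclSet_lt hle hs hev hx)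
      (homin.mem_of_forall_dclSet_lt hle hs hev hy)
  · exact iff_of_false (homin.mem_of_forall_dclSet_lt hle (s := sᶜ) hs.compl hev hx)
      (homin.mem_of_forall_dclSet_lt hle (s := sᶜ) hs.compl hev hy)

theorem IsOMinimalStructure.sameTypeL_snoc_of_forall_dclSet_lt [NoMaxOrder M]
    (homin : IsOMinimalStructure L M) (hle : A.Definable L {g : Fin 2 → M | g 0 ≤ g 1})
    {n : ℕ} {a : Fin n → M} (ha : range a ⊆ A) {x y : M} (hx : ∀ w ∈ dclSet L A, w < x)
    (hy : ∀ w ∈ dclSet L A, w < y) : SameTypeL L (Fin.snoc a x) (Fin.snoc a y) :=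
  fun φ => homin.mem_iff_mem_of_forall_dclSet_lt hle
    ((definable₁_setOf_realize_snoc a φ).mono ha) hx hy

end AboveDcl

theorem stmt_14_general {L : Language} {M : Type*} [L.Structure M] [LinearOrder M]
    (hle : (Set.univ : Set M).Definable L {v : Fin 2 → M | v 0 ≤ v 1})
    (homin : IsOMinimalStructure L M)
    (hcount : Countable M) (hhom : OmegaHom L M)
    (hdcl : ∀ (n : ℕ) (a : Fin n → M), ∃ z : M, ∀ w ∈ dclSet L (Set.range a), w < z)
    (X : Set M)
    (hunb : ∀ x : M, ∃ y ∈ X, x < y)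
    (hcounb : ∀ x : M, ∃ y ∈ Xᶜ, x < y) :
    ∀ (n : ℕ) (a : Fin n → M),
      ∃ π : M ≃[L] M, (∀ i, π (a i) = a i) ∧ π '' X ≠ X := by
  intro n a
  have : NoMaxOrder M := ⟨fun c => (hunb c).imp fun _ h => h.2⟩
  obtain ⟨A₀, -, hA₀⟩ := Set.definable_iff_finitely_definable.mp hle
  obtain ⟨k, b, hb⟩ := ((finite_range a).union A₀.finite_toSet).fin_embedding
  obtain ⟨z, hz⟩ := hdcl k b
  obtain ⟨x, hxX, hzx⟩ := hunb z
  obtain ⟨y, hyX, hzy⟩ := hcounb z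
  have htype : SameTypeL L (Fin.snoc a x) (Fin.snoc a y) :=
    homin.sameTypeL_snoc_of_forall_dclSet_lt (hA₀.mono (hb ▸ subset_union_right))
      (hb ▸ subset_union_left) (fun w hw => (hz w hw).trans hzx) (fun w hw => (hz w hw).trans hzy)
  obtain ⟨π, hπ⟩ := hhom.exists_equiv htype
  refine ⟨π, fun i => by simpa using hπ i.castSucc, fun hX => hyX ?_⟩
  rw [← hX]
  exact ⟨x, hxX, by simpa using hπ (Fin.last n)⟩

theorem stmt_14 {L : Language} {M : Type*} [L.Structure M] [LinearOrder M] [DenselyOrdered M]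
    (hle : (Set.univ : Set M).Definable L {v : Fin 2 → M | v 0 ≤ v 1})
    (homin : IsOMinimalStructure L M)
    (hcount : Countable M) (hhom : OmegaHom L M)
    (hdcl : ∀ (n : ℕ) (a : Fin n → M), ∃ z : M, ∀ w ∈ dclSet L (Set.range a), w < z)
    (X : Set M)
    (hunb : ∀ x : M, ∃ y ∈ X, x < y)
    (hcounb : ∀ x : M, ∃ y ∈ Xᶜ, x < y) :
    ∀ (n : ℕ) (a : Fin n → M),
      ∃ π : M ≃[L] M, (∀ i, π (a i) = a i) ∧ π '' X ≠ X :=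
  stmt_14_general hle homin hcount hhom hdcl X hunb hcounb
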